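/- For every n ≥ 1 and x, y ∈ I with x ≤ y, the n-fold product W^{⊗n}(x,y) satisfies W^{⊗n}(x,y) ≤ W(x,y) · (∫_{(x,y)} W(x,u) m(du))^{n-1} / (n-1)!. -/

import Mathlib

open MeasureTheory Set Filter

noncomputable def otimes (m : Measure ℝ) (f g : ℝ → ℝ → ℝ) : ℝ → ℝ → ℝ :=
  fun x y => ∫ u in Set.Ioo x y, f x u * g u y ∂m

/-- `iterW m W n = W^{⊗(n+1)}` -/
noncomputable def iterW (m : Measure ℝ) (W : ℝ → ℝ → ℝ) : ℕ → ℝ → ℝ → ℝ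
  | 0 => W
  | n + 1 => otimes m W (iterW m W n)

/-- Analytic extension `M^{(q)}(x,y) = Σ_{n≥0} q^n W^{⊗(n+1)}(x,y)` for complex `q`. -/
noncomputable def Mq (m : Measure ℝ) (W : ℝ → ℝ → ℝ) (q : ℂ) (x y : ℝ) : ℂ :=
  ∑' n : ℕ, q ^ n * ((iterW m W n x y : ℝ) : ℂ)

/-- Real version of `M^{(q)}`. -/
noncomputable def Mr (m : Measure ℝ) (W : ℝ → ℝ → ℝ) (q : ℝ) (x y : ℝ) : ℝ :=
  ∑' n : ℕ, q ^ n * iterW m W n x y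

/-- `Z^{(q)}(x,y) = 1 + Σ_{n≥0} q^{n+1} ∫_{(x,y)} W^{⊗(n+1)}(x,u) m(du)`. -/
noncomputable def Zq (m : Measure ℝ) (W : ℝ → ℝ → ℝ) (q : ℂ) (x y : ℝ) : ℂ :=
  1 + ∑' n : ℕ, q ^ (n + 1) * ((∫ u in Set.Ioo x y, iterW m W n x u ∂m : ℝ) : ℂ)

/-! Fix `x` and let `μ` be the finite measure `W(x,u) m(du)` on `(x,y)`, with tail
`T(v) = μ(v,∞)`. Since `W` decreases in its first argument, `W(x',u) W(u,y) ≤ W(x,u) W(x',y)` for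
`x ≤ x' ≤ u ≤ y`, so by induction `W^{⊗(n+1)}(x',y) ≤ W(x',y)/n! · ∫_{(x',∞)} T^n dμ`. For any
finite measure on `ℝ`, `∫_{(a,∞)} μ(u,∞)^n μ(du) ≤ μ(a,∞)^{n+1}/(n+1)`: by the layer cake formula
this follows from the tail estimate `μ{u | t < μ(u,∞)} ≤ μ(ℝ) - t`, which holds because every
compact subset of that down-set lies below one of its points `k`, and `μ(-∞,k] < μ(ℝ) - t`. -/

lemma integral_sub_mul_pow (c : ℝ) (k : ℕ) :
    ∫ t in (0 : ℝ)..c, (c - t) * ((k + 1) * t ^ k) = c ^ (k + 2) / (k + 2) := by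
  rw [intervalIntegral.integral_eq_sub_of_hasDerivAt
    (f := fun t => c * t ^ (k + 1) - (k + 1) * t ^ (k + 2) / (k + 2)) (fun t _ => ?_)
    ((by fun_prop : Continuous fun t : ℝ => (c - t) * ((k + 1) * t ^ k)).intervalIntegrable _ _)]
  · field_simp
    ring
  · convert ((hasDerivAt_pow (k + 1) t).const_mul c).sub
      (((hasDerivAt_pow (k + 2) t).const_mul ((k : ℝ) + 1)).div_const ((k : ℝ) + 2)) using 1
    · rfl
    · push_cast [Nat.add_sub_cancel, show k + 2 - 1 = k + 1 from rfl]
      field_simp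
      ring

section FiniteMeasure

variable (μ : Measure ℝ) [IsFiniteMeasure μ]

lemma antitone_measureReal_Ioi : Antitone fun u => μ.real (Ioi u) :=
  fun _ _ huv => measureReal_mono (Ioi_subset_Ioi huv)

lemma measure_lt_measureReal_Ioi_le (t : ℝ) :
    μ {u | t < μ.real (Ioi u)} ≤ ENNReal.ofReal (μ.real univ - t) := by
  rw [(measurableSet_lt measurable_const
    (antitone_measureReal_Ioi μ).measurable).measure_eq_iSup_isCompact]
  refine iSup₂_le fun K hKA => iSup_le fun hK => ?_
  rcases K.eq_empty_or_nonempty with rfl | hne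
  · simp
  have hmax : t < μ.real (Ioi (sSup K)) := hKA (hK.sSup_mem hne)
  calc μ K ≤ μ (Iic (sSup K)) := measure_mono fun u hu => le_csSup hK.bddAbove hu
    _ = ENNReal.ofReal (μ.real (Iic (sSup K))) := (ofReal_measureReal (measure_ne_top μ _)).symm
    _ ≤ ENNReal.ofReal (μ.real univ - t) := by
      rw [← compl_Ioi, measureReal_compl measurableSet_Ioi]
      gcongr

lemma setLIntegral_measure_lt_measureReal_Ioi_mul_le (k : ℕ) :
    ∫⁻ t in Ioi 0, μ {u | t < μ.real (Ioi u)} * ENNReal.ofReal ((k + 1) * t ^ k) ≤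
      ENNReal.ofReal (μ.real univ ^ (k + 2) / (k + 2)) := by
  set c := μ.real univ
  have hc : 0 ≤ c := measureReal_nonneg
  set φ : ℝ → ℝ := fun t => (c - t) * ((k + 1) * t ^ k)
  calc _ ≤ ∫⁻ t in Ioi 0, ENNReal.ofReal (φ t) := by
        refine setLIntegral_mono' measurableSet_Ioi fun t (ht : 0 < t) => ?_
        rw [ENNReal.ofReal_mul' (p := c - t) (by positivity)]
        gcongr
        exact measure_lt_measureReal_Ioi_le μ t
    _ = ∫⁻ t in Ioc 0 c, ENNReal.ofReal (φ t) := by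
        rw [← Ioc_union_Ioi_eq_Ioi hc, lintegral_union measurableSet_Ioi (Ioc_disjoint_Ioi le_rfl),
          setLIntegral_congr_fun measurableSet_Ioi (g := fun _ => 0) fun t (ht : c < t) =>
            ENNReal.ofReal_of_nonpos (mul_nonpos_of_nonpos_of_nonneg (by linarith)
              (by have := hc.trans_lt ht; positivity)),
          lintegral_zero, add_zero]
    _ = ENNReal.ofReal (∫ t in 0..c, φ t) := by
        rw [intervalIntegral.integral_of_le hc, ofReal_integral_eq_lintegral_ofReal
          ((by fun_prop : Continuous φ).integrableOn_Ioc)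
          (ae_restrict_of_forall_mem measurableSet_Ioc fun t ht =>
            mul_nonneg (by linarith [ht.2]) (by have := ht.1.le; positivity))]
    _ = ENNReal.ofReal (c ^ (k + 2) / (k + 2)) := by rw [integral_sub_mul_pow]

lemma integral_measureReal_Ioi_pow_le (n : ℕ) :
    ∫ u, μ.real (Ioi u) ^ n ∂μ ≤ μ.real univ ^ (n + 1) / (n + 1) := by
  set T := fun u => μ.real (Ioi u)
  have hT : Measurable T := (antitone_measureReal_Ioi μ).measurable
  rcases n with _ | k
  · simp
  have hpow : ∀ s : ℝ, ∫ t in (0 : ℝ)..s, (k + 1) * t ^ k = s ^ (k + 1) := fun s => by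
    rw [intervalIntegral.integral_const_mul, integral_pow]
    field_simp
    simp
  have hlayer := lintegral_comp_eq_lintegral_meas_lt_mul μ (f := T) (g := fun t => (k + 1) * t ^ k)
    (Eventually.of_forall fun u => measureReal_nonneg) hT.aemeasurable
    (fun t _ => (by fun_prop : Continuous fun t : ℝ => (k + 1) * t ^ k).intervalIntegrable _ _)
    (ae_restrict_of_forall_mem measurableSet_Ioi fun t (ht : 0 < t) => by positivity)
  simp only [hpow] at hlayer
  rw [integral_eq_lintegral_of_nonneg_ae (Eventually.of_forall fun u => by positivity)
    (hT.pow_const _).aestronglyMeasurable, hlayer]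
  refine (ENNReal.toReal_le_of_le_ofReal (by positivity)
    (setLIntegral_measure_lt_measureReal_Ioi_mul_le μ k)).trans_eq ?_
  push_cast
  ring

lemma setIntegral_Ioi_measureReal_Ioi_pow_le (a : ℝ) (n : ℕ) :
    ∫ u in Ioi a, μ.real (Ioi u) ^ n ∂μ ≤ μ.real (Ioi a) ^ (n + 1) / (n + 1) := by
  have h := integral_measureReal_Ioi_pow_le (μ.restrict (Ioi a)) n
  rw [measureReal_restrict_apply_univ] at h
  refine le_of_eq_of_le (setIntegral_congr_fun measurableSet_Ioi fun u (hu : a < u) => ?_) h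
  rw [measureReal_restrict_apply measurableSet_Ioi, Ioi_inter_Ioi, max_eq_left hu.le]

end FiniteMeasure

lemma setIntegral_Ioi_withDensity_restrict_Ioo {m : Measure ℝ} {w : ℝ → ℝ} {a b c : ℝ}
    (hw : AEMeasurable w (m.restrict (Ioo a b))) (hw₀ : ∀ u, 0 ≤ w u) (hac : a ≤ c)
    (g : ℝ → ℝ) :
    ∫ u in Ioi c, g u ∂(m.restrict (Ioo a b)).withDensity (fun u => ENNReal.ofReal (w u)) =
      ∫ u in Ioo c b, w u * g u ∂m := by
  rw [setIntegral_withDensity_eq_setIntegral_toReal_smul₀ hw.ennreal_ofReal.restrict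
    (Eventually.of_forall fun _ => ENNReal.ofReal_lt_top) _ measurableSet_Ioi,
    Measure.restrict_restrict measurableSet_Ioi, Ioi_inter_Ioo, max_eq_left hac]
  simp only [ENNReal.toReal_ofReal (hw₀ _), smul_eq_mul]

section Kernel

variable {m : Measure ℝ} {W : ℝ → ℝ → ℝ}

lemma iterW_nonneg (hW : ∀ x y, 0 ≤ W x y) : ∀ n x y, 0 ≤ iterW m W n x y
  | 0, x, y => hW x y
  | n + 1, _, _ => integral_nonneg fun _ => mul_nonneg (hW _ _) (iterW_nonneg hW n _ _)

theorem iterW_le_measureReal_Ioi_pow (hWnn : ∀ x y, 0 ≤ W x y)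
    (hWmono : ∀ x x' y : ℝ, x ≤ x' → x' ≤ y → W x' y ≤ W x y) {x y : ℝ}
    (hint : IntegrableOn (W x) (Ioo x y) m) (μ : Measure ℝ) [IsFiniteMeasure μ]
    (hμ : ∀ c, x ≤ c → ∀ g : ℝ → ℝ, ∫ u in Ioi c, g u ∂μ = ∫ u in Ioo c y, W x u * g u ∂m)
    (n : ℕ) {x' : ℝ} (hx' : x ≤ x') (hx'y : x' ≤ y) :
    iterW m W n x' y ≤ W x' y * μ.real (Ioi x') ^ n / n.factorial := by
  induction n generalizing x' with
  | zero => simp [iterW]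
  | succ n ih =>
    set T := fun u => μ.real (Ioi u)
    have hpoint : ∀ u ∈ Ioo x' y,
        W x' u * iterW m W n u y ≤ W x' y / n.factorial * (W x u * T u ^ n) := fun u hu =>
      calc W x' u * iterW m W n u y ≤ W x u * (W u y * T u ^ n / n.factorial) :=
            mul_le_mul (hWmono x x' u hx' hu.1.le) (ih (hx'.trans hu.1.le) hu.2.le)
              (iterW_nonneg hWnn _ _ _) (hWnn _ _)
        _ ≤ W x u * (W x' y * T u ^ n / n.factorial) := by
            gcongr
            · exact hWnn _ _
            · exact hWmono x' u y hu.1.le hu.2.le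
        _ = W x' y / n.factorial * (W x u * T u ^ n) := by ring
    have hint' : IntegrableOn (fun u => W x u * T u ^ n) (Ioo x' y) m :=
      (hint.mono_set (Ioo_subset_Ioo_left hx')).mul_bdd
        ((antitone_measureReal_Ioi μ).measurable.pow_const n).aestronglyMeasurable
        (ae_of_all _ fun u => by
          rw [norm_pow, Real.norm_of_nonneg measureReal_nonneg]
          exact pow_le_pow_left₀ measureReal_nonneg (measureReal_mono (subset_univ _)) n)
    calc iterW m W (n + 1) x' y = ∫ u in Ioo x' y, W x' u * iterW m W n u y ∂m := rfl
      _ ≤ ∫ u in Ioo x' y, W x' y / n.factorial * (W x u * T u ^ n) ∂m :=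
          integral_mono_of_nonneg
            (ae_of_all _ fun u => mul_nonneg (hWnn _ _) (iterW_nonneg hWnn _ _ _))
            (hint'.const_mul _) (ae_restrict_of_forall_mem measurableSet_Ioo hpoint)
      _ = W x' y / n.factorial * ∫ u in Ioi x', T u ^ n ∂μ := by
          rw [integral_const_mul, hμ x' hx']
      _ ≤ W x' y / n.factorial * (T x' ^ (n + 1) / (n + 1)) :=
          mul_le_mul_of_nonneg_left (setIntegral_Ioi_measureReal_Ioi_pow_le μ x' n)
            (div_nonneg (hWnn _ _) n.factorial.cast_nonneg)
      _ = W x' y * T x' ^ (n + 1) / (n + 1).factorial := by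
          push_cast [Nat.factorial_succ]
          field_simp

theorem iterW_le_of_integrableOn (hWnn : ∀ x y, 0 ≤ W x y)
    (hWmono : ∀ x x' y : ℝ, x ≤ x' → x' ≤ y → W x' y ≤ W x y) {x y : ℝ}
    (hint : IntegrableOn (W x) (Ioo x y) m) (hxy : x ≤ y) (n : ℕ) :
    iterW m W n x y ≤ W x y * (∫ u in Ioo x y, W x u ∂m) ^ n / n.factorial := by
  set μ := (m.restrict (Ioo x y)).withDensity fun u => ENNReal.ofReal (W x u)
  have : IsFiniteMeasure μ := isFiniteMeasure_withDensity_ofReal hint.hasFiniteIntegral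
  have hμ : ∀ c, x ≤ c → ∀ g : ℝ → ℝ, ∫ u in Ioi c, g u ∂μ = ∫ u in Ioo c y, W x u * g u ∂m :=
    fun _ hc g => setIntegral_Ioi_withDensity_restrict_Ioo hint.aemeasurable (hWnn x) hc g
  have hmass : μ.real (Ioi x) = ∫ u in Ioo x y, W x u ∂m := by simpa using hμ x le_rfl fun _ => 1
  simpa [hmass] using iterW_le_measureReal_Ioi_pow hWnn hWmono hint μ hμ n le_rfl hxy

end Kernel

theorem stmt0_general (I : Set ℝ) (m : Measure ℝ) (W : ℝ → ℝ → ℝ)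
    (hWnn : ∀ x y, 0 ≤ W x y)
    (hWmono : ∀ x x' y : ℝ, x ≤ x' → x' ≤ y → W x' y ≤ W x y)
    (hWint : ∀ x y : ℝ, x ∈ I → y ∈ I → x < y →
      IntegrableOn (fun u => W x u) (Set.Ioo x y) m)
    (n : ℕ) (x y : ℝ) (hx : x ∈ I) (hy : y ∈ I) (hxy : x ≤ y) :
    iterW m W (n - 1) x y ≤
      W x y * (∫ u in Set.Ioo x y, W x u ∂m) ^ (n - 1) / (Nat.factorial (n - 1) : ℝ) := by
  have hint : IntegrableOn (W x) (Ioo x y) m := by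
    rcases hxy.lt_or_eq with hlt | rfl
    · exact hWint x y hx hy hlt
    · simp
  exact iterW_le_of_integrableOn hWnn hWmono hint hxy (n - 1)

theorem stmt0 (I : Set ℝ) (m : Measure ℝ) (W : ℝ → ℝ → ℝ)
    (hWmeas : Measurable (Function.uncurry W))
    (hWnn : ∀ x y, 0 ≤ W x y)
    (hWvanish : ∀ x y : ℝ, y < x → W x y = 0)
    (hWmono : ∀ x x' y : ℝ, x ≤ x' → x' ≤ y → W x' y ≤ W x y)
    (hWint : ∀ x y : ℝ, x ∈ I → y ∈ I → x < y →
      IntegrableOn (fun u => W x u) (Set.Ioo x y) m)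
    (n : ℕ) (hn : 1 ≤ n) (x y : ℝ) (hx : x ∈ I) (hy : y ∈ I) (hxy : x ≤ y) :
    iterW m W (n - 1) x y ≤
      W x y * (∫ u in Set.Ioo x y, W x u ∂m) ^ (n - 1) / (Nat.factorial (n - 1) : ℝ) :=
  stmt0_general I m W hWnn hWmono hWint n x y hx hy hxy
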